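/- Let ω be a non-negative integrable function on the interval (a,b) with ∫_a^b ω(y) dy = 1 and with y^k ω(y) integrable on (a,b) for every k ≥ 0, and let L_ω[f] = ∫_a^b f(y) ω(y) dy. Assume 1 ∉ (a,b), and let (P_n)_{n≥0} be a sequence of real polynomials with deg P_n = n that is orthogonal with respect to the functional L_{(y−1)ω}[f] = ∫_a^b f(y)(y−1)ω(y) dy and satisfies L_ω[P_n] = 1 for all n. Then ∫_a^b P_n(y) P_n(x·y) ω(y) dy = P_n(x) for all real x and every n. -/

import Mathlib

/-! Orthogonality of `Pₙ` to `P₀, …, Pₙ₋₁` for `L_{(y-1)ω}` means `L_ω[Pₙ · q · (y - 1)] = 0`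
whenever `deg q < n`. If `deg r ≤ n`, then `r - r(1)` is such a multiple `q · (y - 1)`, so
`L_ω[Pₙ r] = r(1) · L_ω[Pₙ] = r(1)`; now take `r(y) = Pₙ(xy)`. -/

open MeasureTheory Set Polynomial

theorem Polynomial.map_mul_eq_map_mul_eval_of_map_mul_X_sub_C_eq_zero {R : Type*} [CommRing R]
    (L : R[X] →ₗ[R] R) (p : R[X]) (c : R) {n : ℕ}
    (hp : ∀ q : R[X], q.degree < n → L (p * q * (X - C c)) = 0)
    {r : R[X]} (hr : r.degree ≤ n) : L (p * r) = L p * r.eval c := by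
  nontriviality R
  have hquot : (r /ₘ (X - C c)).degree < n := by
    rcases eq_or_ne r 0 with rfl | hr0
    · simp
    · exact (degree_divByMonic_lt r _ hr0 (by simp)).trans_le hr
  have hdecomp : p * r = r.eval c • p + p * (r /ₘ (X - C c)) * (X - C c) := by
    conv_lhs => rw [← modByMonic_add_div r (X - C c), modByMonic_X_sub_C_eq_C_eval]
    rw [smul_eq_C_mul]
    ring
  rw [hdecomp, map_add, map_smul, hp _ hquot, smul_eq_mul, add_zero, mul_comm]

theorem Polynomial.Sequence.map_mul_eq_zero_of_degree_lt {K : Type*} [Field K] (S : Sequence K)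
    (M : K[X] →ₗ[K] K) (horth : ∀ n m, n ≠ m → M (S n * S m) = 0)
    {n : ℕ} {q : K[X]} (hq : q.degree < n) : M (S n * q) = 0 := by
  have hspan : q ∈ Submodule.span K (S '' Iio n) := by
    rw [S.span_degreeLT fun i _ => (leadingCoeff_ne_zero.mpr (S.ne_zero i)).isUnit]
    exact mem_degreeLT.mpr hq
  have hle : Submodule.span K (S '' Iio n) ≤ LinearMap.ker (M ∘ₗ LinearMap.mulLeft K (S n)) := by
    rw [Submodule.span_le]
    rintro _ ⟨m, hm, rfl⟩
    exact horth n m (ne_of_gt hm)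
  exact hle hspan

theorem Polynomial.Sequence.map_mul_eq_map_mul_eval {K : Type*} [Field K] (S : Sequence K)
    (L : K[X] →ₗ[K] K) (c : K) (horth : ∀ n m, n ≠ m → L (S n * S m * (X - C c)) = 0)
    {n : ℕ} {r : K[X]} (hr : r.degree ≤ n) : L (S n * r) = L (S n) * r.eval c :=
  map_mul_eq_map_mul_eval_of_map_mul_X_sub_C_eq_zero L (S n) c
    (fun _ hq => S.map_mul_eq_zero_of_degree_lt (L ∘ₗ LinearMap.mulRight K (X - C c)) horth hq) hr

theorem Polynomial.integrable_eval_mul {μ : Measure ℝ} {ω : ℝ → ℝ}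
    (h_moments : ∀ k : ℕ, Integrable (fun y => y ^ k * ω y) μ) (p : ℝ[X]) :
    Integrable (fun y => p.eval y * ω y) μ := by
  induction p using Polynomial.induction_on' with
  | add p q hp hq =>
    simp only [eval_add, add_mul]
    exact hp.add hq
  | monomial k a => simpa only [eval_monomial, mul_assoc] using (h_moments k).const_mul a

noncomputable def weightedIntegral (μ : Measure ℝ) (ω : ℝ → ℝ)
    (h_moments : ∀ k : ℕ, Integrable (fun y => y ^ k * ω y) μ) : ℝ[X] →ₗ[ℝ] ℝ where
  toFun p := ∫ y, p.eval y * ω y ∂μ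
  map_add' p q := by
    simp only [eval_add, add_mul]
    exact integral_add (integrable_eval_mul h_moments p) (integrable_eval_mul h_moments q)
  map_smul' a p := by
    simp only [eval_smul, smul_eq_mul, mul_assoc, integral_const_mul, RingHom.id_apply]

theorem OPS_solves_multiplicative_integral_eq_general (a b : ℝ) (ω : ℝ → ℝ)
    (h_moments : ∀ k : ℕ, IntegrableOn (fun y => y ^ k * ω y) (Ioo a b))
    (P : ℕ → Polynomial ℝ)
    (hdeg : ∀ n, (P n).natDegree = n)
    (horth : ∀ n m, n ≠ m →
      (∫ y in Ioo a b, (P n).eval y * (P m).eval y * (y - 1) * ω y) = 0)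
    (hnorm : ∀ n, (∫ y in Ioo a b, (P n).eval y * ω y) = 1) :
    ∀ (n : ℕ) (x : ℝ),
      (∫ y in Ioo a b, (P n).eval y * (P n).eval (x * y) * ω y) = (P n).eval x := by
  intro n x
  have hP : ∀ n, P n ≠ 0 := fun n h => by simpa [h] using hnorm n
  let S : Sequence ℝ := ⟨P, fun n => by rw [degree_eq_natDegree (hP n), hdeg]⟩
  let L := weightedIntegral (volume.restrict (Ioo a b)) ω h_moments
  have hL : ∀ p : ℝ[X], L p = ∫ y in Ioo a b, p.eval y * ω y := fun _ => rfl
  have hLorth : ∀ n m, n ≠ m → L (S n * S m * (X - C 1)) = 0 := fun n m hnm => by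
    simpa [hL, S] using horth n m hnm
  have hcomp : ((P n).comp (C x * X)).degree ≤ n := by
    refine degree_le_of_natDegree_le (natDegree_comp_le.trans ?_)
    simpa [hdeg] using Nat.mul_le_mul_left n ((natDegree_C_mul_le x X).trans natDegree_X_le)
  have hmain := S.map_mul_eq_map_mul_eval L 1 hLorth hcomp
  simpa [hL, S, hnorm, mul_comm x] using hmain

/-- Special case `ζ = 1, τ = 0, σ = 1` of Theorem 3 (the Bender–Ben-Naim equation
`∫ P(y) P(xy) ω(y) dy = P(x)`): if `1 ∉ (a,b)`, an OPS for `L_{(y-1)ω}` normalized by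
`L_ω[Pₙ] = 1` solves `∫ Pₙ(y) Pₙ(xy) ω(y) dy = Pₙ(x)`. -/
theorem OPS_solves_multiplicative_integral_eq (a b : ℝ) (ω : ℝ → ℝ)
    (hω_nonneg : ∀ y ∈ Ioo a b, 0 ≤ ω y)
    (hω_int : IntegrableOn ω (Ioo a b))
    (hω_norm : (∫ y in Ioo a b, ω y) = 1)
    (h_moments : ∀ k : ℕ, IntegrableOn (fun y => y ^ k * ω y) (Ioo a b))
    (hone : (1 : ℝ) ∉ Ioo a b)
    (P : ℕ → Polynomial ℝ)
    (hdeg : ∀ n, (P n).natDegree = n)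
    (horth : ∀ n m, n ≠ m →
      (∫ y in Ioo a b, (P n).eval y * (P m).eval y * (y - 1) * ω y) = 0)
    (hne : ∀ n, (∫ y in Ioo a b, ((P n).eval y) ^ 2 * (y - 1) * ω y) ≠ 0)
    (hnorm : ∀ n, (∫ y in Ioo a b, (P n).eval y * ω y) = 1) :
    ∀ (n : ℕ) (x : ℝ),
      (∫ y in Ioo a b, (P n).eval y * (P n).eval (x * y) * ω y) = (P n).eval x :=
  OPS_solves_multiplicative_integral_eq_general a b ω h_moments P hdeg horth hnorm
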